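/- The countable random poset (the unique countable homogeneous universal partial order) is not reversible: it admits a bijective order-homomorphism onto itself that is not an order-automorphism. -/

import Mathlib

/-- `p` and `q` are incomparable. -/
def Incomp {P : Type} [PartialOrder P] (p q : P) : Prop := ¬ p < q ∧ ¬ q < p

/-- A countable poset is the countable random poset (the Fraïssé limit of the
class of finite posets) iff it satisfies the one-point extension property:
for all finite `L, G, I` with `L < G` and no forbidden comparabilities with `I`,
there is a new point `x` with `L < x < G` and `x` incomparable to all of `I`. -/
def IsRandomPoset (P : Type) [PartialOrder P] : Prop :=
  Countable P ∧ Infinite P ∧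
    ∀ L G I : Finset P,
      (∀ a ∈ L, ∀ b ∈ G, a < b) →
      (∀ i ∈ I, ∀ a ∈ L, ¬ i ≤ a) →
      (∀ i ∈ I, ∀ b ∈ G, ¬ b ≤ i) →
      ∃ x : P, x ∉ L ∧ x ∉ G ∧ x ∉ I ∧
        (∀ a ∈ L, a < x) ∧ (∀ b ∈ G, x < b) ∧ ∀ i ∈ I, Incomp x i

/-!
Back and forth. Start from the finite partial map `p ↦ p, q ↦ p'` where `p, q` are incomparable
and `p < p'`: it is injective and strictly monotone, but does not reflect the order. The
one-point extension property lets us extend any finite injective strictly monotone partial map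
to a new point of the domain (send it strictly between the images of the points below and above
it, avoiding the finitely many values already taken) and to a new point of the range (take as
preimage a fresh point incomparable to the whole domain). Enumerating the countable poset
alternately on both sides, the union of the resulting chain is the graph of a bijective strict
homomorphism `F` with `F p < F q` although `p` and `q` are incomparable.
-/

section BackAndForth

variable {α β : Type*} {r : α × β → α × β → Prop}

theorem exists_pairwise_superset_of_extend {s : Finset (α × β)}
    (hs : (s : Set (α × β)).Pairwise r) (Q : α × β → Prop)
    (extend : (∀ y ∈ s, ¬ Q y) → ∃ x, Q x ∧ (insert x (s : Set (α × β))).Pairwise r) :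
    ∃ t : Finset (α × β), s ⊆ t ∧ (t : Set (α × β)).Pairwise r ∧ ∃ x ∈ t, Q x := by
  classical
  by_cases hQ : ∃ y ∈ s, Q y
  · exact ⟨s, subset_rfl, hs, hQ⟩
  · simp only [not_exists, not_and] at hQ
    obtain ⟨x, hx, hxs⟩ := extend hQ
    exact ⟨insert x s, Finset.subset_insert x s, by rwa [Finset.coe_insert],
      x, Finset.mem_insert_self x s, hx⟩

theorem exists_pairwise_of_back_and_forth [Countable α] [Countable β]
    (forth : ∀ s : Finset (α × β), (s : Set (α × β)).Pairwise r → ∀ a, (∀ y ∈ s, y.1 ≠ a) →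
      ∃ b, (insert (a, b) (s : Set (α × β))).Pairwise r)
    (back : ∀ s : Finset (α × β), (s : Set (α × β)).Pairwise r → ∀ b, (∀ y ∈ s, y.2 ≠ b) →
      ∃ a, (insert (a, b) (s : Set (α × β))).Pairwise r)
    (s₀ : Finset (α × β)) (hs₀ : (s₀ : Set (α × β)).Pairwise r) :
    ∃ Γ : Set (α × β), ↑s₀ ⊆ Γ ∧ Γ.Pairwise r ∧
      (∀ a, ∃ b, (a, b) ∈ Γ) ∧ ∀ b, ∃ a, (a, b) ∈ Γ := by
  cases nonempty_encodable α
  cases nonempty_encodable β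
  let Q : α ⊕ β → α × β → Prop := fun i x => Sum.elim (x.1 = ·) (x.2 = ·) i
  let D : α ⊕ β → Order.Cofinal {s : Finset (α × β) // (s : Set (α × β)).Pairwise r} :=
    fun i =>
      { carrier := {s | ∃ x ∈ s.1, Q i x}
        isCofinal := fun s => by
          obtain ⟨t, hst, ht, hQ⟩ := exists_pairwise_superset_of_extend s.2 (Q i) <| by
            rcases i with a | b
            · intro h
              obtain ⟨b, hb⟩ := forth s.1 s.2 a h
              exact ⟨(a, b), rfl, hb⟩
            · intro h
              obtain ⟨a, ha⟩ := back s.1 s.2 b h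
              exact ⟨(a, b), rfl, ha⟩
          exact ⟨⟨t, ht⟩, hQ, hst⟩ }
  let seq := Order.sequenceOfCofinals ⟨s₀, hs₀⟩ D
  have hcover (i : α ⊕ β) : ∃ x ∈ ⋃ n, ((seq n).1 : Set (α × β)), Q i x := by
    obtain ⟨x, hx, hQ⟩ := Order.sequenceOfCofinals.encode_mem ⟨s₀, hs₀⟩ D i
    exact ⟨x, Set.mem_iUnion.2 ⟨_, hx⟩, hQ⟩
  have hdirected : Directed (· ⊆ ·) fun n => ((seq n).1 : Set (α × β)) :=
    Monotone.directed_le fun _ _ h =>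
      Finset.coe_subset.2 (Order.sequenceOfCofinals.monotone ⟨s₀, hs₀⟩ D h)
  refine ⟨_, Set.subset_iUnion (fun n => ((seq n).1 : Set (α × β))) 0,
    (Set.pairwise_iUnion hdirected).2 fun n => (seq n).2,
    fun a => ?_, fun b => ?_⟩
  · obtain ⟨⟨_, b⟩, hx, rfl⟩ := hcover (.inl a)
    exact ⟨b, hx⟩
  · obtain ⟨⟨a, _⟩, hx, rfl⟩ := hcover (.inr b)
    exact ⟨a, hx⟩

theorem exists_bijective_of_pairwise (hr : ∀ x y, r x y → x.1 ≠ y.1 ∧ x.2 ≠ y.2)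
    {Γ : Set (α × β)} (hΓ : Γ.Pairwise r)
    (hdom : ∀ a, ∃ b, (a, b) ∈ Γ) (hran : ∀ b, ∃ a, (a, b) ∈ Γ) :
    ∃ f : α → β, Function.Bijective f ∧ (∀ x ∈ Γ, f x.1 = x.2) ∧
      Pairwise fun a a' => r (a, f a) (a', f a') := by
  choose f hfΓ using hdom
  have hgraph (x : α × β) (hx : x ∈ Γ) : f x.1 = x.2 := by
    by_contra hne
    exact (hr _ _ (hΓ (hfΓ x.1) hx fun h => hne (congrArg Prod.snd h))).1 rfl
  refine ⟨f, ⟨fun a a' h => ?_, fun b => ?_⟩, hgraph, fun a a' h => ?_⟩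
  · by_contra hne
    exact (hr _ _ (hΓ (hfΓ a) (hfΓ a') fun e => hne (congrArg Prod.fst e))).2 h
  · obtain ⟨a, hab⟩ := hran b
    exact ⟨a, hgraph _ hab⟩
  · exact hΓ (hfΓ a) (hfΓ a') fun e => h (congrArg Prod.fst e)

theorem exists_bijective_of_back_and_forth [Countable α] [Countable β]
    (hr : ∀ x y, r x y → x.1 ≠ y.1 ∧ x.2 ≠ y.2)
    (forth : ∀ s : Finset (α × β), (s : Set (α × β)).Pairwise r → ∀ a, (∀ y ∈ s, y.1 ≠ a) →
      ∃ b, (insert (a, b) (s : Set (α × β))).Pairwise r)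
    (back : ∀ s : Finset (α × β), (s : Set (α × β)).Pairwise r → ∀ b, (∀ y ∈ s, y.2 ≠ b) →
      ∃ a, (insert (a, b) (s : Set (α × β))).Pairwise r)
    (s₀ : Finset (α × β)) (hs₀ : (s₀ : Set (α × β)).Pairwise r) :
    ∃ f : α → β, Function.Bijective f ∧ (∀ x ∈ s₀, f x.1 = x.2) ∧
      Pairwise fun a a' => r (a, f a) (a', f a') := by
  obtain ⟨Γ, hs₀Γ, hΓ, hdom, hran⟩ := exists_pairwise_of_back_and_forth forth back s₀ hs₀
  obtain ⟨f, hf, hfΓ, hfr⟩ := exists_bijective_of_pairwise hr hΓ hdom hran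
  exact ⟨f, hf, fun x hx => hfΓ x (hs₀Γ hx), hfr⟩

end BackAndForth

section RandomPoset

variable {P : Type} [PartialOrder P]

def OnePointExtension (P : Type) [PartialOrder P] : Prop :=
  ∀ L G I : Finset P,
    (∀ a ∈ L, ∀ b ∈ G, a < b) →
    (∀ i ∈ I, ∀ a ∈ L, ¬ i ≤ a) →
    (∀ i ∈ I, ∀ b ∈ G, ¬ b ≤ i) →
    ∃ x : P, x ∉ L ∧ x ∉ G ∧ x ∉ I ∧
      (∀ a ∈ L, a < x) ∧ (∀ b ∈ G, x < b) ∧ ∀ i ∈ I, Incomp x i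

/-- A finite set of pairs is the graph of an injective strictly monotone partial map iff its
elements are pairwise compatible in this sense. -/
def StrictMonoCompatible (x y : P × P) : Prop :=
  x.1 ≠ y.1 ∧ x.2 ≠ y.2 ∧ (x.1 < y.1 → x.2 < y.2)

namespace OnePointExtension

theorem exists_incomp_and_lt (hP : OnePointExtension P) :
    ∃ p q p' : P, p ≠ q ∧ Incomp p q ∧ p < p' := by
  obtain ⟨p, -⟩ := hP ∅ ∅ ∅ (by simp) (by simp) (by simp)
  obtain ⟨q, -, -, hqp, -, -, hinc⟩ := hP ∅ ∅ {p} (by simp) (by simp) (by simp)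
  obtain ⟨p', -, -, -, hpp', -⟩ := hP {p} ∅ ∅ (by simp) (by simp) (by simp)
  have hqp : q ≠ p := by simpa using hqp
  have hinc : Incomp q p := hinc p (Finset.mem_singleton_self p)
  exact ⟨p, q, p', hqp.symm, ⟨hinc.2, hinc.1⟩, hpp' p (Finset.mem_singleton_self p)⟩

/-- Put into `I` the elements of `S` that `L < x < G` does not already separate from `x`. -/
theorem exists_between_notMem (hP : OnePointExtension P) (L G S : Finset P)
    (hLG : ∀ a ∈ L, ∀ b ∈ G, a < b) :
    ∃ x, (∀ a ∈ L, a < x) ∧ (∀ b ∈ G, x < b) ∧ x ∉ S := by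
  classical
  obtain ⟨x, -, -, hxI, hLx, hxG, -⟩ :=
    hP L G (S.filter fun i => (∀ a ∈ L, ¬ i ≤ a) ∧ ∀ b ∈ G, ¬ b ≤ i) hLG
      (fun i hi => (Finset.mem_filter.1 hi).2.1) (fun i hi => (Finset.mem_filter.1 hi).2.2)
  refine ⟨x, hLx, hxG, fun hxS => hxI (Finset.mem_filter.2 ⟨hxS, ?_, ?_⟩)⟩
  · exact fun a ha hxa => (hLx a ha).not_ge hxa
  · exact fun b hb hbx => (hxG b hb).not_ge hbx

theorem exists_forth (hP : OnePointExtension P) (s : Finset (P × P))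
    (hs : (s : Set (P × P)).Pairwise StrictMonoCompatible) (a : P) (ha : ∀ y ∈ s, y.1 ≠ a) :
    ∃ b, (insert (a, b) (s : Set (P × P))).Pairwise StrictMonoCompatible := by
  classical
  have hLG : ∀ c ∈ (s.filter (·.1 < a)).image Prod.snd,
      ∀ d ∈ (s.filter (a < ·.1)).image Prod.snd, c < d := by
    simp only [Finset.mem_image, Finset.mem_filter]
    rintro _ ⟨y, ⟨hy, hya⟩, rfl⟩ _ ⟨z, ⟨hz, haz⟩, rfl⟩
    exact (hs hy hz fun h => (hya.trans haz).ne (congrArg Prod.fst h)).2.2 (hya.trans haz)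
  obtain ⟨b, hLb, hbG, hbS⟩ := hP.exists_between_notMem _ _ (s.image Prod.snd) hLG
  refine ⟨b, hs.insert fun y hy _ => ?_⟩
  have hb : b ≠ y.2 := fun h => hbS (Finset.mem_image.2 ⟨y, hy, h.symm⟩)
  exact ⟨⟨(ha y hy).symm, hb, fun h => hbG _ (Finset.mem_image_of_mem _ (by simpa using ⟨hy, h⟩))⟩,
    ⟨ha y hy, hb.symm, fun h => hLb _ (Finset.mem_image_of_mem _ (by simpa using ⟨hy, h⟩))⟩⟩

theorem exists_back (hP : OnePointExtension P) (s : Finset (P × P))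
    (hs : (s : Set (P × P)).Pairwise StrictMonoCompatible) (b : P) (hb : ∀ y ∈ s, y.2 ≠ b) :
    ∃ a, (insert (a, b) (s : Set (P × P))).Pairwise StrictMonoCompatible := by
  classical
  obtain ⟨a, -, -, haI, -, -, hinc⟩ := hP ∅ ∅ (s.image Prod.fst) (by simp) (by simp) (by simp)
  refine ⟨a, hs.insert fun y hy _ => ?_⟩
  have hy₁ := Finset.mem_image_of_mem Prod.fst hy
  have ha : a ≠ y.1 := fun h => haI (h ▸ hy₁)
  exact ⟨⟨ha, (hb y hy).symm, fun h => absurd h (hinc _ hy₁).1⟩,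
    ⟨ha.symm, hb y hy, fun h => absurd h (hinc _ hy₁).2⟩⟩

end OnePointExtension

end RandomPoset

theorem stmt_9 {P : Type} [PartialOrder P] (hP : IsRandomPoset P) :
    ∃ F : P → P, Function.Bijective F ∧ (∀ p q : P, p < q → F p < F q) ∧
      ¬ ∀ p q : P, F p < F q → p < q := by
  classical
  have : Countable P := hP.1
  have hext : OnePointExtension P := hP.2.2
  obtain ⟨p, q, p', hpq, hinc, hpp'⟩ := hext.exists_incomp_and_lt
  have hseed : (({(p, p), (q, p')} : Finset (P × P)) : Set (P × P)).Pairwise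
      StrictMonoCompatible := by
    rw [Finset.coe_pair, Set.pairwise_pair]
    exact fun _ => ⟨⟨hpq, hpp'.ne, fun _ => hpp'⟩,
      ⟨hpq.symm, hpp'.ne', fun h => absurd h hinc.2⟩⟩
  obtain ⟨F, hbij, hFseed, hF⟩ := exists_bijective_of_back_and_forth
    (fun _ _ h => ⟨h.1, h.2.1⟩) hext.exists_forth hext.exists_back _ hseed
  refine ⟨F, hbij, fun a b hab => (hF hab.ne).2.2 hab, fun hrefl => hinc.1 (hrefl p q ?_)⟩
  rw [hFseed (p, p) (by simp), hFseed (q, p') (by simp)]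
  exact hpp'
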